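/- Let g be a finite-dimensional real Lie algebra with a biinvariant inner product Q, let L ⊆ g be a linear subspace, and set L₁ := [L, g] and I := span(L ∪ L₁ ∪ [L₁, L₁]). Then [I⊥, L] = 0, where I⊥ is the orthogonal complement of I with respect to Q. -/

import Mathlib

/-!
For `x ∈ I⊥` and `l ∈ L`, invariance of `Q` gives `Q [x,l] [x,l] = Q [l,[x,l]] x`, which vanishes
because `[l,[x,l]] ∈ [L, g] ⊆ I`; definiteness of `Q` then forces `[x,l] = 0`.
-/

def bracketSpan {g : Type*} [LieRing g] [LieAlgebra ℝ g]
    (A B : Submodule ℝ g) : Submodule ℝ g :=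
  Submodule.span ℝ {z | ∃ a ∈ A, ∃ b ∈ B, z = ⁅a, b⁆}

section bracketSpan

variable {g : Type*} [LieRing g] [LieAlgebra ℝ g] {A B : Submodule ℝ g}

theorem lie_mem_bracketSpan {a b : g} (ha : a ∈ A) (hb : b ∈ B) : ⁅a, b⁆ ∈ bracketSpan A B :=
  Submodule.subset_span ⟨a, ha, b, hb, rfl⟩

theorem bracketSpan_eq_bot_iff : bracketSpan A B = ⊥ ↔ ∀ a ∈ A, ∀ b ∈ B, ⁅a, b⁆ = 0 := by
  rw [eq_bot_iff, bracketSpan, Submodule.span_le]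
  constructor
  · intro h a ha b hb
    exact h ⟨a, ha, b, hb, rfl⟩
  · rintro h _ ⟨a, ha, b, hb, rfl⟩
    simp [h a ha b hb]

end bracketSpan

section InvariantForm

variable {R g : Type*} [CommRing R] [LieRing g] [LieAlgebra R g] {Q : LinearMap.BilinForm R g}

theorem apply_lie_lie_self (hbi : ∀ z x y : g, Q ⁅z, x⁆ y + Q x ⁅z, y⁆ = 0) (x l : g) :
    Q ⁅l, ⁅x, l⁆⁆ x = Q ⁅x, l⁆ ⁅x, l⁆ := by
  have h := hbi l ⁅x, l⁆ x
  rw [← lie_skew l x, map_neg] at h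
  linear_combination h

theorem lie_eq_zero_of_apply_lie_lie_eq_zero (hanis : ∀ v : g, Q v v = 0 → v = 0)
    (hbi : ∀ z x y : g, Q ⁅z, x⁆ y + Q x ⁅z, y⁆ = 0) {x l : g} (h : Q ⁅l, ⁅x, l⁆⁆ x = 0) :
    ⁅x, l⁆ = 0 :=
  hanis _ (apply_lie_lie_self hbi x l ▸ h)

end InvariantForm

theorem bracket_orthogonal_ideal_L_eq_bot_general
    (g : Type*) [LieRing g] [LieAlgebra ℝ g]
    (Q : LinearMap.BilinForm ℝ g)
    (hpos : ∀ x : g, x ≠ 0 → 0 < Q x x)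
    (hbi : ∀ z x y : g, Q ⁅z, x⁆ y + Q x ⁅z, y⁆ = 0)
    (L L₁ I : Submodule ℝ g)
    (hL₁ : L₁ = bracketSpan L ⊤)
    (hI : I = L ⊔ L₁ ⊔ bracketSpan L₁ L₁) :
    bracketSpan (Q.orthogonal I) L = ⊥ := by
  have hanis : ∀ v : g, Q v v = 0 → v = 0 := fun v hv => by
    by_contra hne
    exact (hpos v hne).ne' hv
  have hL₁I : L₁ ≤ I := hI ▸ le_sup_of_le_left le_sup_right
  rw [bracketSpan_eq_bot_iff]
  intro x hx l hl
  have hmem : ⁅l, ⁅x, l⁆⁆ ∈ I := hL₁I (hL₁ ▸ lie_mem_bracketSpan hl Submodule.mem_top)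
  exact lie_eq_zero_of_apply_lie_lie_eq_zero hanis hbi (hx _ hmem)

/-- Let `g` be a finite-dimensional real Lie algebra with a biinvariant inner product `Q`,
`L ⊆ g` a linear subspace, `L₁ := [L, g]` and `I := span(L ∪ L₁ ∪ [L₁, L₁])`.
Then `[I⊥, L] = 0`, where `I⊥` is the `Q`-orthogonal complement of `I`. -/
theorem bracket_orthogonal_ideal_L_eq_bot
    (g : Type*) [LieRing g] [LieAlgebra ℝ g] [FiniteDimensional ℝ g]
    (Q : LinearMap.BilinForm ℝ g)
    (hsymm : ∀ x y : g, Q x y = Q y x)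
    (hpos : ∀ x : g, x ≠ 0 → 0 < Q x x)
    (hbi : ∀ z x y : g, Q ⁅z, x⁆ y + Q x ⁅z, y⁆ = 0)
    (L L₁ I : Submodule ℝ g)
    (hL₁ : L₁ = bracketSpan L ⊤)
    (hI : I = L ⊔ L₁ ⊔ bracketSpan L₁ L₁) :
    bracketSpan (Q.orthogonal I) L = ⊥ :=
  bracket_orthogonal_ideal_L_eq_bot_general g Q hpos hbi L L₁ I hL₁ hI
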